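/- arXiv:1310.1226 — 6 statements merged into one kernel-verified Lean document; each statement's English description precedes it below -/
import Mathlib

section
/- Let A = ℤ_p⟦q⟧ and let φ: A → A be the ℤ_p-algebra endomorphism with φ(q) = q^p, and ∂ = q·d/dq. Suppose κ ∈ A can be written formally as κ = ε₀ + Σ_{n≥1} ε_n · n³ q^n/(1 − q^n) with ε_n ∈ ℚ_p, and suppose φ(κ) − κ = ∂³f for some f ∈ A. Then ε_n ∈ ℤ_p for all n ≥ 1. -/
open Finset

/-- If `n ∣ N`, `p ∣ N`, but `n ∤ N/p`, then `p^(v_p N) ∣ n`. -/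
lemma aux_pow_dvd {p N n : ℕ} (hp : p.Prime) (hN : N ≠ 0) (hpN : p ∣ N)
    (hn : n ∣ N) (hnM : ¬ n ∣ N / p) : p ^ N.factorization p ∣ n := by
  have hn0 : n ≠ 0 := by
    rintro rfl; exact hN (Nat.eq_zero_of_zero_dvd hn)
  by_contra h
  rw [hp.pow_dvd_iff_le_factorization hn0, not_le] at h
  -- show n ∣ N / p, contradiction
  apply hnM
  rw [Nat.dvd_div_iff_mul_dvd hpN]
  have hpn0 : p * n ≠ 0 := mul_ne_zero hp.ne_zero hn0
  rw [← Nat.factorization_le_iff_dvd hpn0 hN, Nat.factorization_mul hp.ne_zero hn0]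
  have hnN := (Nat.factorization_le_iff_dvd hn0 hN).mpr hn
  intro q
  rw [Finsupp.add_apply, hp.factorization, Finsupp.single_apply]
  rcases eq_or_ne p q with rfl | hq
  · simp only [if_pos rfl, eq_self_iff_true, if_true]
    omega
  · simp only [if_neg hq, zero_add]
    exact hnN q

lemma aux_norm_nat_le_one (p : ℕ) [Fact p.Prime] (m : ℕ) : ‖(m : ℚ_[p])‖ ≤ 1 := by
  have := Padic.norm_int_le_one (p := p) (m : ℤ)
  rwa [Int.cast_natCast] at this

lemma aux_norm_nat_eq_one (p : ℕ) [Fact p.Prime] {m : ℕ} (h : ¬ p ∣ m) : ‖(m : ℚ_[p])‖ = 1 := by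
  refine le_antisymm (aux_norm_nat_le_one p m) (not_lt.mp fun hlt => h ?_)
  have := (Padic.norm_intCast_lt_one_iff (p := p) (k := (m : ℤ))).mp (by rwa [Int.cast_natCast])
  exact_mod_cast this

/-- Exact norm of a natural number in `ℚ_[p]`. -/
lemma aux_norm_natCast (p : ℕ) [Fact p.Prime] {N : ℕ} (hN : N ≠ 0) :
    ‖(N : ℚ_[p])‖ = (p : ℝ) ^ (-(N.factorization p) : ℤ) := by
  have hp : p.Prime := Fact.out
  set v := N.factorization p with hv
  have hdecomp : p ^ v * (N / p ^ v) = N := Nat.ordProj_mul_ordCompl_eq_self N p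
  have hnd : ¬ p ∣ N / p ^ v := Nat.not_dvd_ordCompl hp hN
  have h1 : ‖((N / p ^ v : ℕ) : ℚ_[p])‖ = 1 := aux_norm_nat_eq_one p hnd
  calc ‖(N : ℚ_[p])‖ = ‖((p ^ v * (N / p ^ v) : ℕ) : ℚ_[p])‖ := by rw [hdecomp]
    _ = ‖(p : ℚ_[p]) ^ v‖ * ‖((N / p ^ v : ℕ) : ℚ_[p])‖ := by push_cast; rw [norm_mul]
    _ = (p : ℝ) ^ (-v : ℤ) := by rw [h1, mul_one, Padic.norm_p_pow]

/-- Norm comparison: if `p^(v_p N) ∣ n` then `‖n‖ ≤ ‖N‖` in `ℚ_[p]`. -/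
lemma aux_norm_le (p : ℕ) [Fact p.Prime] {N n : ℕ} (hN : N ≠ 0)
    (h : p ^ N.factorization p ∣ n) : ‖(n : ℚ_[p])‖ ≤ ‖(N : ℚ_[p])‖ := by
  rw [aux_norm_natCast p hN]
  have : ((p : ℤ) ^ N.factorization p) ∣ (n : ℤ) := by exact_mod_cast h
  have := (Padic.norm_int_le_pow_iff_dvd (p := p) (n : ℤ) (N.factorization p)).mpr this
  simpa using this

/-- The common final step: if `x * N³ = -(N³ * y) - ∑_{n∈T} g n` with `‖y‖ ≤ 1` and
each `‖g n‖ ≤ ‖N³‖`, then `‖x‖ ≤ 1`. -/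
lemma aux_final (p : ℕ) [Fact p.Prime] {N : ℕ} (hN : N ≠ 0) (x y : ℚ_[p])
    {T : Finset ℕ} {g : ℕ → ℚ_[p]}
    (h : x * (N : ℚ_[p]) ^ 3 = -((N : ℚ_[p]) ^ 3 * y) - ∑ n ∈ T, g n)
    (hy : ‖y‖ ≤ 1) (hT : ∀ n ∈ T, ‖g n‖ ≤ ‖(N : ℚ_[p]) ^ 3‖) : ‖x‖ ≤ 1 := by
  have hN3 : (0 : ℝ) < ‖(N : ℚ_[p]) ^ 3‖ :=
    norm_pos_iff.mpr (pow_ne_zero _ (Nat.cast_ne_zero.mpr hN))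
  have hsum : ‖∑ n ∈ T, g n‖ ≤ ‖(N : ℚ_[p]) ^ 3‖ :=
    IsUltrametricDist.norm_sum_le_of_forall_le_of_nonneg hN3.le hT
  have h1 : ‖-((N : ℚ_[p]) ^ 3 * y)‖ ≤ ‖(N : ℚ_[p]) ^ 3‖ := by
    rw [norm_neg, norm_mul]
    calc ‖(N : ℚ_[p]) ^ 3‖ * ‖y‖ ≤ ‖(N : ℚ_[p]) ^ 3‖ * 1 :=
      mul_le_mul_of_nonneg_left hy (norm_nonneg _)
    _ = ‖(N : ℚ_[p]) ^ 3‖ := mul_one _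
  have key : ‖x * (N : ℚ_[p]) ^ 3‖ ≤ ‖(N : ℚ_[p]) ^ 3‖ := by
    rw [h, sub_eq_add_neg]
    exact le_trans (Padic.nonarchimedean _ _)
      (max_le h1 (by rwa [norm_neg]))
  rw [norm_mul] at key
  exact le_of_mul_le_mul_right (by rw [one_mul]; exact key) hN3

/-- KSV integrality, r = 3, V = ℤ_p: if `κ ∈ ℤ_p⟦q⟧` has
`q^N`-coefficient `Σ_{n ∣ N} ε_n n³` for `N ≥ 1` (i.e. `κ = ε₀ + Σ ε_n n³ qⁿ/(1−qⁿ)`)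
and `φ(κ) − κ = ∂³ f` for the Frobenius lift `φ(q) = q^p` and `∂ = q d/dq`
(expressed on coefficients), then every `ε_n` (n ≥ 1) is a `p`-adic integer. -/
theorem stmt4 (p : ℕ) [Fact p.Prime] (κ f : PowerSeries ℤ_[p]) (ε : ℕ → ℚ_[p])
    (hκ : ∀ N : ℕ, 1 ≤ N →
      ((PowerSeries.coeff (R := ℤ_[p]) N κ : ℤ_[p]) : ℚ_[p])
        = ∑ n ∈ N.divisors, ε n * (n : ℚ_[p]) ^ 3)
    (hφ : ∀ N : ℕ, 1 ≤ N →
      (if p ∣ N then PowerSeries.coeff (R := ℤ_[p]) (N / p) κ else 0)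
          - PowerSeries.coeff (R := ℤ_[p]) N κ
        = (N : ℤ_[p]) ^ 3 * PowerSeries.coeff (R := ℤ_[p]) N f) :
    ∀ n : ℕ, 1 ≤ n → ‖ε n‖ ≤ 1 := by
  intro n
  induction n using Nat.strong_induction_on with
  | _ N IH =>
  intro hN1
  have hp : p.Prime := Fact.out
  have hN0 : N ≠ 0 := by omega
  have hNmem : N ∈ N.divisors := Nat.mem_divisors_self N hN0
  -- norm of f's coefficient
  have hfN : ‖((PowerSeries.coeff (R := ℤ_[p]) N f : ℤ_[p]) : ℚ_[p])‖ ≤ 1 := by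
    rw [PadicInt.padic_norm_e_of_padicInt]
    exact PadicInt.norm_le_one _
  -- bound on terms with index n < N, n ≥ 1
  have hterm : ∀ n, n ∈ N.divisors → n ≠ N → ‖ε n * (n : ℚ_[p]) ^ 3‖ ≤ ‖(n : ℚ_[p])‖ ^ 3 := by
    intro n hn hne
    obtain ⟨hdvd, -⟩ := Nat.mem_divisors.mp hn
    have hpos : 1 ≤ n := Nat.pos_of_mem_divisors hn
    have hlt : n < N := lt_of_le_of_ne (Nat.le_of_dvd (by omega) hdvd) hne
    have hIH : ‖ε n‖ ≤ 1 := IH n hlt hpos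
    rw [norm_mul, norm_pow]
    calc ‖ε n‖ * ‖(n : ℚ_[p])‖ ^ 3 ≤ 1 * ‖(n : ℚ_[p])‖ ^ 3 :=
      mul_le_mul_of_nonneg_right hIH (by positivity)
    _ = ‖(n : ℚ_[p])‖ ^ 3 := one_mul _
  by_cases hpd : p ∣ N
  · -- case p ∣ N
    set M := N / p with hM
    have hM1 : 1 ≤ M := Nat.one_le_div_iff hp.pos |>.mpr (Nat.le_of_dvd (by omega) hpd)
    have hMdvd : M ∣ N := Nat.div_dvd_of_dvd hpd
    have hMlt : M < N := Nat.div_lt_self (by omega) hp.one_lt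
    have hsub : M.divisors ⊆ N.divisors := Nat.divisors_subset_of_dvd hN0 hMdvd
    -- the equation from hφ, cast to ℚ_p
    have hE : ((PowerSeries.coeff (R := ℤ_[p]) M κ : ℤ_[p]) : ℚ_[p])
        - ((PowerSeries.coeff (R := ℤ_[p]) N κ : ℤ_[p]) : ℚ_[p])
        = (N : ℚ_[p]) ^ 3 * ((PowerSeries.coeff (R := ℤ_[p]) N f : ℤ_[p]) : ℚ_[p]) := by
      have := hφ N hN1
      rw [if_pos hpd] at this
      exact_mod_cast congrArg (fun z : ℤ_[p] => (z : ℚ_[p])) this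
    -- sum over the sdiff
    have hsd : ∑ n ∈ N.divisors \ M.divisors, ε n * (n : ℚ_[p]) ^ 3
        = ((PowerSeries.coeff (R := ℤ_[p]) N κ : ℤ_[p]) : ℚ_[p])
          - ((PowerSeries.coeff (R := ℤ_[p]) M κ : ℤ_[p]) : ℚ_[p]) := by
      rw [hκ N hN1, hκ M hM1, eq_sub_iff_add_eq, Finset.sum_sdiff hsub]
    have hNsd : N ∈ N.divisors \ M.divisors := by
      rw [Finset.mem_sdiff]
      refine ⟨hNmem, fun hmem => ?_⟩
      have := Nat.le_of_dvd (by omega) (Nat.mem_divisors.mp hmem).1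
      omega
    -- split off N
    have hsplit : ε N * (N : ℚ_[p]) ^ 3
        = -((N : ℚ_[p]) ^ 3 * ((PowerSeries.coeff (R := ℤ_[p]) N f : ℤ_[p]) : ℚ_[p]))
          - ∑ n ∈ (N.divisors \ M.divisors).erase N, ε n * (n : ℚ_[p]) ^ 3 := by
      have := Finset.add_sum_erase _ (fun n => ε n * (n : ℚ_[p]) ^ 3) hNsd
      rw [hsd] at this
      have h2 : ((PowerSeries.coeff (R := ℤ_[p]) N κ : ℤ_[p]) : ℚ_[p])
          - ((PowerSeries.coeff (R := ℤ_[p]) M κ : ℤ_[p]) : ℚ_[p])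
          = -((N : ℚ_[p]) ^ 3 * ((PowerSeries.coeff (R := ℤ_[p]) N f : ℤ_[p]) : ℚ_[p])) := by
        rw [← hE]; ring
      rw [h2] at this
      linear_combination this
    refine aux_final p hN0 _ _ hsplit hfN ?_
    intro n hn
    rw [Finset.mem_erase, Finset.mem_sdiff] at hn
    obtain ⟨hne, hnd, hnM⟩ := hn
    have hdvd := (Nat.mem_divisors.mp hnd).1
    have hnotM : ¬ n ∣ M := fun h => hnM (Nat.mem_divisors.mpr ⟨h, by omega⟩)
    have hpow : p ^ N.factorization p ∣ n := aux_pow_dvd hp hN0 hpd hdvd hnotM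
    have hle : ‖(n : ℚ_[p])‖ ≤ ‖(N : ℚ_[p])‖ := aux_norm_le p hN0 hpow
    calc ‖ε n * (n : ℚ_[p]) ^ 3‖ ≤ ‖(n : ℚ_[p])‖ ^ 3 := hterm n hnd hne
      _ ≤ ‖(N : ℚ_[p])‖ ^ 3 := by
          exact pow_le_pow_left₀ (norm_nonneg _) hle 3
      _ = ‖(N : ℚ_[p]) ^ 3‖ := (norm_pow _ _).symm
  · -- case p ∤ N
    have hE : -((PowerSeries.coeff (R := ℤ_[p]) N κ : ℤ_[p]) : ℚ_[p])
        = (N : ℚ_[p]) ^ 3 * ((PowerSeries.coeff (R := ℤ_[p]) N f : ℤ_[p]) : ℚ_[p]) := by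
      have := hφ N hN1
      rw [if_neg hpd, zero_sub] at this
      exact_mod_cast congrArg (fun z : ℤ_[p] => (z : ℚ_[p])) this
    have hnorm1 : ‖(N : ℚ_[p])‖ = 1 := by
      exact aux_norm_nat_eq_one p hpd
    have hsplit : ε N * (N : ℚ_[p]) ^ 3
        = -((N : ℚ_[p]) ^ 3 * ((PowerSeries.coeff (R := ℤ_[p]) N f : ℤ_[p]) : ℚ_[p]))
          - ∑ n ∈ N.divisors.erase N, ε n * (n : ℚ_[p]) ^ 3 := by
      have := Finset.add_sum_erase _ (fun n => ε n * (n : ℚ_[p]) ^ 3) hNmem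
      rw [← hκ N hN1] at this
      have h2 : ((PowerSeries.coeff (R := ℤ_[p]) N κ : ℤ_[p]) : ℚ_[p])
          = -((N : ℚ_[p]) ^ 3 * ((PowerSeries.coeff (R := ℤ_[p]) N f : ℤ_[p]) : ℚ_[p])) := by
        rw [← hE]; ring
      rw [h2] at this
      linear_combination this
    refine aux_final p hN0 _ _ hsplit hfN ?_
    intro n hn
    rw [Finset.mem_erase] at hn
    obtain ⟨hne, hnd⟩ := hn
    have hle1 : ‖(n : ℚ_[p])‖ ≤ 1 := aux_norm_nat_le_one p n
    calc ‖ε n * (n : ℚ_[p]) ^ 3‖ ≤ ‖(n : ℚ_[p])‖ ^ 3 := hterm n hnd hne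
      _ ≤ 1 := pow_le_one₀ (norm_nonneg _) hle1
      _ = ‖(N : ℚ_[p]) ^ 3‖ := by rw [norm_pow, hnorm1, one_pow]
end

section
/- Let c: ℕ₊ → ℤ_p and define ε: ℕ₊ → ℚ_p by Möbius inversion: ε(N)·N = Σ_{d | N} μ(d) c(N/d). Suppose that for all N ≥ 1, v_p(c(pN) − c(N)) ≥ v_p(pN). Then v_p(ε(N)·N) ≥ v_p(N) for all N, i.e. ε(N) ∈ ℤ_p. -/
open ArithmeticFunction

lemma norm_nat_eq_one {p : ℕ} [Fact p.Prime] {a : ℕ} (ha : ¬ p ∣ a) :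
    ‖(a : ℚ_[p])‖ = 1 := by
  have h1 : ‖((a : ℤ) : ℚ_[p])‖ ≤ 1 := Padic.norm_int_le_one _
  have h2 : ¬ ‖((a : ℤ) : ℚ_[p])‖ < 1 := by
    rw [Padic.norm_intCast_lt_one_iff]
    exact_mod_cast ha
  push_cast at h1 h2
  linarith [lt_or_eq_of_le h1]

lemma key (p : ℕ) [Fact p.Prime] (c : ℕ → ℤ_[p])
    (hc : ∀ N : ℕ, 1 ≤ N →
      ‖((c (p * N) - c N : ℤ_[p]) : ℚ_[p])‖ ≤ ‖(p : ℚ_[p]) * (N : ℚ_[p])‖)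
    (N : ℕ) (hN : 1 ≤ N) :
    ‖∑ d ∈ N.divisors, ((moebius d : ℤ) : ℚ_[p]) * ((c (N / d) : ℤ_[p]) : ℚ_[p])‖
      ≤ ‖(N : ℚ_[p])‖ := by
  have hp : p.Prime := Fact.out
  have hp1 : 1 < p := hp.one_lt
  have hN0 : N ≠ 0 := by omega
  set f : ℕ → ℚ_[p] := fun d => ((moebius d : ℤ) : ℚ_[p]) * ((c (N / d) : ℤ_[p]) : ℚ_[p])
    with hf
  by_cases hpN : p ∣ N
  case neg =>
    rw [norm_nat_eq_one hpN]
    refine IsUltrametricDist.norm_sum_le_of_forall_le_of_nonneg zero_le_one ?_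
    intro d _
    calc ‖f d‖ ≤ ‖((moebius d : ℤ) : ℚ_[p])‖ * ‖((c (N / d) : ℤ_[p]) : ℚ_[p])‖ :=
          (norm_mul _ _).le
    _ ≤ 1 * 1 :=
        mul_le_mul (Padic.norm_int_le_one _) (PadicInt.norm_le_one _)
          (norm_nonneg _) zero_le_one
    _ = 1 := one_mul 1
  case pos =>
    set m := ordCompl[p] N with hm
    have hm0 : 0 < m := Nat.ordCompl_pos p hN0
    have hcop : Nat.Coprime p m := Nat.coprime_ordCompl hp hN0
    have hmdvd : m ∣ N := Nat.ordCompl_dvd N p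
    have hpm : ¬ p ∣ m := fun h => hp.ne_one (Nat.Coprime.eq_one_of_dvd hcop h)
    have hdisj : Disjoint m.divisors (m.divisors.image (p * ·)) := by
      rw [Finset.disjoint_right]
      intro d hd hdm
      obtain ⟨e, _, rfl⟩ := Finset.mem_image.mp hd
      exact hpm ((Dvd.intro e rfl).trans (Nat.dvd_of_mem_divisors hdm))
    have hsub : m.divisors ∪ m.divisors.image (p * ·) ⊆ N.divisors := by
      intro d hd
      rw [Finset.mem_union] at hd
      rcases hd with hd | hd
      · exact Nat.mem_divisors.mpr ⟨(Nat.dvd_of_mem_divisors hd).trans hmdvd, hN0⟩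
      · obtain ⟨e, he, rfl⟩ := Finset.mem_image.mp hd
        refine Nat.mem_divisors.mpr ⟨?_, hN0⟩
        have h1 : p * e ∣ p * m := mul_dvd_mul_left p (Nat.dvd_of_mem_divisors he)
        refine h1.trans ?_
        have hk : 1 ≤ N.factorization p := (hp.dvd_iff_one_le_factorization hN0).mp hpN
        calc p * m ∣ p ^ N.factorization p * m :=
              mul_dvd_mul_right (dvd_pow_self p (by omega)) m
        _ = N := Nat.ordProj_mul_ordCompl_eq_self N p
    have hzero : ∀ d ∈ N.divisors, d ∉ m.divisors ∪ m.divisors.image (p * ·) → f d = 0 := by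
      intro d hd hdm
      have hsq : ¬ Squarefree d := by
        intro hsq
        apply hdm
        have hd0 : d ≠ 0 := hsq.ne_zero
        set a := d.factorization p with ha
        set e := ordCompl[p] d with he
        have hed : e ∣ m := Nat.ordCompl_dvd_ordCompl_of_dvd (Nat.dvd_of_mem_divisors hd) p
        have hem : e ∈ m.divisors := Nat.mem_divisors.mpr ⟨hed, by omega⟩
        have ha1 : a ≤ 1 := (Nat.squarefree_iff_factorization_le_one hd0).mp hsq p
        have hde : p ^ a * e = d := Nat.ordProj_mul_ordCompl_eq_self d p
        interval_cases a
        · rw [Finset.mem_union]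
          left
          rw [pow_zero, one_mul] at hde
          exact hde ▸ hem
        · rw [Finset.mem_union]
          right
          rw [pow_one] at hde
          exact Finset.mem_image.mpr ⟨e, hem, hde⟩
      simp [hf, moebius_eq_zero_of_not_squarefree hsq]
    rw [← Finset.sum_subset hsub hzero, Finset.sum_union hdisj,
      Finset.sum_image (fun x _ y _ h => Nat.eq_of_mul_eq_mul_left (by omega) h),
      ← Finset.sum_add_distrib]
    refine IsUltrametricDist.norm_sum_le_of_forall_le_of_nonneg (norm_nonneg _) ?_
    intro e he
    have hed : e ∣ m := Nat.dvd_of_mem_divisors he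
    have he0 : e ≠ 0 := by rintro rfl; exact (Nat.mem_divisors.mp he).2 (zero_dvd_iff.mp hed)
    have hpe : ¬ p ∣ e := fun h => hpm (h.trans hed)
    have hcpe : Nat.Coprime p e := (Nat.Prime.coprime_iff_not_dvd hp).mpr hpe
    have hpeN : p * e ∣ N := Nat.dvd_of_mem_divisors (hsub (Finset.mem_union_right _
      (Finset.mem_image.mpr ⟨e, he, rfl⟩)))
    set M := N / (p * e) with hM
    have hM1 : 1 ≤ M := Nat.div_pos (Nat.le_of_dvd (by omega) hpeN) (by positivity)
    have hNpe : (p * e) * M = N := Nat.mul_div_cancel' hpeN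
    have hNe : N / e = p * M := by
      have : e * (p * M) = N := by rw [← hNpe]; ring
      rw [← this, Nat.mul_div_cancel_left _ (by omega)]
    have hmu : (moebius (p * e) : ℤ) = -(moebius e : ℤ) := by
      rw [isMultiplicative_moebius.map_mul_of_coprime hcpe, moebius_apply_prime hp]
      ring
    have hterm : f e + f (p * e)
        = ((moebius e : ℤ) : ℚ_[p]) * ((c (p * M) - c M : ℤ_[p]) : ℚ_[p]) := by
      simp only [hf, hNe, hmu]
      have : N / (p * e) = M := rfl
      rw [this]
      push_cast
      ring
    rw [hterm]
    have hNnorm : ‖(N : ℚ_[p])‖ = ‖(p : ℚ_[p]) * (M : ℚ_[p])‖ := by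
      have hcast : (N : ℚ_[p]) = (e : ℚ_[p]) * ((p : ℚ_[p]) * (M : ℚ_[p])) := by
        rw [← hNpe]; push_cast; ring
      rw [hcast, norm_mul, norm_nat_eq_one hpe, one_mul]
    rw [hNnorm]
    calc ‖((moebius e : ℤ) : ℚ_[p]) * ((c (p * M) - c M : ℤ_[p]) : ℚ_[p])‖
        ≤ ‖((moebius e : ℤ) : ℚ_[p])‖ * ‖((c (p * M) - c M : ℤ_[p]) : ℚ_[p])‖ :=
          (norm_mul _ _).le
      _ ≤ 1 * ‖(p : ℚ_[p]) * (M : ℚ_[p])‖ :=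
          mul_le_mul (Padic.norm_int_le_one _) (hc M hM1) (norm_nonneg _) zero_le_one
      _ = ‖(p : ℚ_[p]) * (M : ℚ_[p])‖ := one_mul _

/-- single-variable KSV skeleton: if `c : ℕ₊ → ℤ_p` satisfies the
Dwork-type congruence `v_p(c(pN) − c(N)) ≥ v_p(pN)` and `ε` is its Möbius
transform, `ε(N)·N = Σ_{d ∣ N} μ(d) c(N/d)`, then `ε(N) ∈ ℤ_p` for all `N ≥ 1`. -/
theorem stmt5 (p : ℕ) [Fact p.Prime] (c : ℕ → ℤ_[p]) (ε : ℕ → ℚ_[p])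
    (hε : ∀ N : ℕ, 1 ≤ N →
      ε N * (N : ℚ_[p]) = ∑ d ∈ N.divisors,
        ((ArithmeticFunction.moebius d : ℤ) : ℚ_[p]) * ((c (N / d) : ℤ_[p]) : ℚ_[p]))
    (hc : ∀ N : ℕ, 1 ≤ N →
      ‖((c (p * N) - c N : ℤ_[p]) : ℚ_[p])‖ ≤ ‖(p : ℚ_[p]) * (N : ℚ_[p])‖) :
    ∀ N : ℕ, 1 ≤ N → ‖ε N‖ ≤ 1 := by
  intro N hN
  have hkey := key p c hc N hN
  rw [← hε N hN, norm_mul] at hkey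
  have hNnorm : 0 < ‖(N : ℚ_[p])‖ := by
    rw [norm_pos_iff]
    exact_mod_cast (by omega : N ≠ 0)
  calc ‖ε N‖ = ‖ε N‖ * ‖(N : ℚ_[p])‖ / ‖(N : ℚ_[p])‖ := by field_simp
    _ ≤ ‖(N : ℚ_[p])‖ / ‖(N : ℚ_[p])‖ := by gcongr
    _ = 1 := div_self hNnorm.ne'
end

section
/- (Dwork's integrality criterion, one variable) Let W be the Witt vectors of a perfect field of characteristic p, with Frobenius σ, and let f ∈ 1 + t·K⟦t⟧ where K = Frac(W). Then f ∈ 1 + t·W⟦t⟧ if and only if f(t)^p / f^σ(t^p) ∈ 1 + p·t·W⟦t⟧, where f^σ is obtained by applying σ to the coefficients of f. -/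
open PowerSeries

variable {p : ℕ} [Fact p.Prime]

section Witt
variable {k : Type*} [Field k] [CharP k p] [PerfectRing k p]

theorem dw_p_dvd (x : WittVector p k) (hx : x.coeff 0 = 0) :
    (p : WittVector p k) ∣ x := by
  have h1 : x = WittVector.verschiebung (x.shift 1) := by
    have h := WittVector.eq_iterate_verschiebung (x := x) (n := 1)
      (by intro i hi; interval_cases i; exact hx)
    simpa using h
  obtain ⟨y, hy⟩ := (WittVector.frobenius_bijective p k).surjective (x.shift 1)
  refine ⟨y, ?_⟩
  rw [h1, ← hy, WittVector.verschiebung_frobenius, mul_comm]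

theorem dw_frob_dvd (x : WittVector p k) :
    (p : WittVector p k) ∣ WittVector.frobenius x - x ^ p := by
  apply dw_p_dvd
  have h : WittVector.constantCoeff (WittVector.frobenius x - x ^ p) = 0 := by
    rw [map_sub, map_pow]
    simp [WittVector.constantCoeff_apply, WittVector.coeff_frobenius_charP]
  simpa [WittVector.constantCoeff_apply] using h

end Witt

theorem dw_freshman {R : Type*} [CommRing R] [CharP R p] (f : PowerSeries R) (n : ℕ) :
    PowerSeries.coeff n (f ^ p) = if p ∣ n then (PowerSeries.coeff (n / p) f) ^ p else 0 := by
  classical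
  have hp : p.Prime := Fact.out
  haveI : ExpChar R p := ExpChar.prime hp
  set P := PowerSeries.trunc (n + 1) f with hP
  have hdvd : (PowerSeries.X : PowerSeries R) ^ (n + 1) ∣ f ^ p - (P : PowerSeries R) ^ p := by
    refine dvd_trans ?_ (sub_dvd_pow_sub_pow f (P : PowerSeries R) p)
    rw [PowerSeries.X_pow_dvd_iff]
    intro m hm
    rw [map_sub, Polynomial.coeff_coe, PowerSeries.coeff_trunc, if_pos hm, sub_self]
  have h1 : PowerSeries.coeff n (f ^ p) = PowerSeries.coeff n ((P : PowerSeries R) ^ p) := by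
    have h2 := (PowerSeries.X_pow_dvd_iff.mp hdvd) n (Nat.lt_succ_self n)
    rw [map_sub, sub_eq_zero] at h2
    exact h2
  rw [h1, ← Polynomial.coe_pow, Polynomial.coeff_coe, ← Polynomial.map_frobenius_expand p P,
    Polynomial.coeff_map, Polynomial.coeff_expand hp.pos]
  split_ifs with h
  · rw [frobenius_def]
    congr 1
    rw [PowerSeries.coeff_trunc, if_pos (lt_of_le_of_lt (Nat.div_le_self n p) (Nat.lt_succ_self n))]
  · exact map_zero _

section Key
variable {k : Type*} [Field k] [CharP k p] [PerfectRing k p]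

theorem dw_key (F : PowerSeries (WittVector p k)) (n : ℕ) :
    (p : WittVector p k) ∣ PowerSeries.coeff n (F ^ p) -
      (if p ∣ n then WittVector.frobenius (PowerSeries.coeff (n / p) F) else 0) := by
  classical
  haveI : CharP (WittVector p k ⧸ (Ideal.span {(p : WittVector p k)})) p :=
    CharP.quotient (WittVector p k) p
      (mem_nonunits_iff.mpr (WittVector.irreducible p).not_isUnit)
  let q : WittVector p k →+* WittVector p k ⧸ (Ideal.span {(p : WittVector p k)}) :=
    Ideal.Quotient.mk _
  rw [← Ideal.Quotient.eq_zero_iff_dvd]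
  have hsub : (Ideal.Quotient.mk (Ideal.span {(p : WittVector p k)}))
      (PowerSeries.coeff n (F ^ p) -
        (if p ∣ n then WittVector.frobenius (PowerSeries.coeff (n / p) F) else 0))
      = q (PowerSeries.coeff n (F ^ p)) -
        q (if p ∣ n then WittVector.frobenius (PowerSeries.coeff (n / p) F) else 0) :=
    RingHom.map_sub _ _ _
  rw [hsub]
  have h1 : q (PowerSeries.coeff n (F ^ p)) =
      PowerSeries.coeff n ((PowerSeries.map q F) ^ p) := by
    rw [← map_pow, PowerSeries.coeff_map]
  have h2 : q (if p ∣ n then WittVector.frobenius (PowerSeries.coeff (n / p) F) else 0)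
      = if p ∣ n then (PowerSeries.coeff (n / p) (PowerSeries.map q F)) ^ p else 0 := by
    split_ifs with h
    · have h3 : q (WittVector.frobenius (PowerSeries.coeff (n / p) F)) =
          q ((PowerSeries.coeff (n / p) F) ^ p) := by
        rw [← sub_eq_zero, ← RingHom.map_sub, Ideal.Quotient.eq_zero_iff_dvd]
        exact dw_frob_dvd _
      rw [h3, RingHom.map_pow, PowerSeries.coeff_map]
    · exact RingHom.map_zero q
  rw [h1, h2, dw_freshman, sub_self]
theorem dw_pack (F : PowerSeries (WittVector p k)) :
    ∃ H : PowerSeries (WittVector p k),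
      F ^ p = (PowerSeries.mk fun n =>
          if p ∣ n then WittVector.frobenius (PowerSeries.coeff (n / p) F) else 0)
        + (p : PowerSeries (WittVector p k)) * H := by
  classical
  refine ⟨PowerSeries.mk fun n => (dw_key F n).choose, ?_⟩
  ext n
  have hs := (dw_key F n).choose_spec
  rw [map_add, PowerSeries.coeff_mk]
  have hc : (p : PowerSeries (WittVector p k)) = PowerSeries.C (p : WittVector p k) := by
    rw [map_natCast]
  rw [hc, PowerSeries.coeff_C_mul, PowerSeries.coeff_mk]
  rw [← hs]
  ring

end Key

section Main
variable {k : Type*} [Field k] [CharP k p] [PerfectRing k p]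
  {K : Type*} [Field K] [Algebra (WittVector p k) K] [IsFractionRing (WittVector p k) K]

theorem dw_forward (σK : K →+* K)
    (hσ : ∀ w : WittVector p k,
      σK (algebraMap (WittVector p k) K w) = algebraMap (WittVector p k) K (WittVector.frobenius w))
    (F : PowerSeries (WittVector p k))
    (hf1 : PowerSeries.constantCoeff F = 1) :
    ∃ h : PowerSeries (WittVector p k),
      (PowerSeries.map (algebraMap (WittVector p k) K) F) ^ p =
        (PowerSeries.mk fun n => if p ∣ n then
            σK (PowerSeries.coeff (n / p) (PowerSeries.map (algebraMap (WittVector p k) K) F))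
          else 0)
        * PowerSeries.map (algebraMap (WittVector p k) K)
            (1 + (p : PowerSeries (WittVector p k)) * PowerSeries.X * h) := by
  classical
  set G : PowerSeries (WittVector p k) := PowerSeries.mk fun n =>
    if p ∣ n then WittVector.frobenius (PowerSeries.coeff (n / p) F) else 0 with hG
  obtain ⟨H, hH⟩ := dw_pack F
  have hG0 : PowerSeries.constantCoeff G = 1 := by
    rw [hG, ← PowerSeries.coeff_zero_eq_constantCoeff_apply, PowerSeries.coeff_mk,
      if_pos (dvd_zero p), Nat.zero_div, PowerSeries.coeff_zero_eq_constantCoeff_apply, hf1,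
      map_one]
  -- inverse of G
  set U : PowerSeries (WittVector p k) := PowerSeries.invOfUnit G 1 with hU
  have hGU : G * U = 1 := PowerSeries.mul_invOfUnit G 1 (by rw [hG0, Units.val_one])
  -- constant coefficient of H is zero
  have hH0 : PowerSeries.constantCoeff H = 0 := by
    have h1 : PowerSeries.constantCoeff (F ^ p) = 1 := by rw [map_pow, hf1, one_pow]
    have h2 := congrArg (PowerSeries.constantCoeff) hH
    rw [h1, map_add, hG0, map_mul, map_natCast] at h2
    have h3 : (p : WittVector p k) * PowerSeries.constantCoeff H = 0 := by
      linear_combination -h2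
    exact (mul_eq_zero.mp h3).resolve_left (WittVector.p_nonzero p k)
  have hXu : PowerSeries.X ∣ U * H := by
    rw [PowerSeries.X_dvd_iff, map_mul, hH0, mul_zero]
  obtain ⟨h, hh⟩ := hXu
  refine ⟨h, ?_⟩
  have key : F ^ p = G * (1 + (p : PowerSeries (WittVector p k)) * PowerSeries.X * h) := by
    have : G * (1 + (p : PowerSeries (WittVector p k)) * PowerSeries.X * h)
        = G + (p : PowerSeries (WittVector p k)) * (G * (PowerSeries.X * h)) := by ring
    rw [this, ← hh]
    have : G * (U * H) = (G * U) * H := by ring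
    rw [this, hGU, one_mul, hH]
  have hmapG : PowerSeries.map (algebraMap (WittVector p k) K) G =
      PowerSeries.mk fun n => if p ∣ n then
        σK (PowerSeries.coeff (n / p) (PowerSeries.map (algebraMap (WittVector p k) K) F))
      else 0 := by
    ext n
    rw [PowerSeries.coeff_map, hG, PowerSeries.coeff_mk, PowerSeries.coeff_mk]
    split_ifs with hd
    · rw [PowerSeries.coeff_map, hσ]
    · exact map_zero _
  rw [← map_pow, key, map_mul, hmapG]

theorem dw_reverse (σK : K →+* K)
    (hσ : ∀ w : WittVector p k,
      σK (algebraMap (WittVector p k) K w) = algebraMap (WittVector p k) K (WittVector.frobenius w))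
    (f : PowerSeries K) (hf : PowerSeries.constantCoeff f = 1)
    (h : PowerSeries (WittVector p k))
    (heq : f ^ p = (PowerSeries.mk fun m => if p ∣ m then σK (PowerSeries.coeff (m / p) f) else 0)
        * PowerSeries.map (algebraMap (WittVector p k) K)
            (1 + (p : PowerSeries (WittVector p k)) * PowerSeries.X * h))
    (N : ℕ) : ∃ b : WittVector p k, algebraMap (WittVector p k) K b = PowerSeries.coeff N f := by
  classical
  have hp : p.Prime := Fact.out
  induction N using Nat.strong_induction_on with
  | _ n ih =>
  rcases Nat.eq_zero_or_pos n with rfl | hn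
  · exact ⟨1, by rw [map_one, PowerSeries.coeff_zero_eq_constantCoeff_apply, hf]⟩
  -- the integral truncation T of f below degree n
  set T : PowerSeries (WittVector p k) := PowerSeries.mk fun m =>
    if hm : m < n then (ih m hm).choose else 0 with hT
  set Tk : PowerSeries K := PowerSeries.map (algebraMap (WittVector p k) K) T with hTk
  have hTkc : ∀ m, PowerSeries.coeff m Tk = if m < n then PowerSeries.coeff m f else 0 := by
    intro m
    rw [hTk, PowerSeries.coeff_map, hT, PowerSeries.coeff_mk]
    split_ifs with hm
    · exact (ih m hm).choose_spec
    · exact map_zero _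
  have hTk0 : PowerSeries.constantCoeff Tk = 1 := by
    rw [← PowerSeries.coeff_zero_eq_constantCoeff_apply, hTkc, if_pos hn,
      PowerSeries.coeff_zero_eq_constantCoeff_apply, hf]
  set g : PowerSeries K := f - Tk with hg
  have hgX : PowerSeries.X ^ n ∣ g := by
    rw [PowerSeries.X_pow_dvd_iff]
    intro m hm
    rw [hg, map_sub, hTkc, if_pos hm, sub_self]
  obtain ⟨r, hr⟩ := hgX
  have hr0 : PowerSeries.coeff 0 r = PowerSeries.coeff n f := by
    have h1 := PowerSeries.coeff_mul_X_pow r n 0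
    rw [zero_add] at h1
    have h2 : PowerSeries.coeff n g = PowerSeries.coeff n f := by
      rw [hg, map_sub, hTkc, if_neg (lt_irrefl n), sub_zero]
    rw [← h2, hr, mul_comm, h1]
  obtain ⟨q0, hq0⟩ : ∃ q0, p = q0 + 2 := ⟨p - 2, by have := hp.two_le; omega⟩
  -- Step A : coefficient n of f^p
  have hA : PowerSeries.coeff n (f ^ p)
      = PowerSeries.coeff n (Tk ^ p) + (p : K) * PowerSeries.coeff n f := by
    have hfg : f = Tk + g := by rw [hg]; ring
    have hsum : f ^ p = ∑ j ∈ Finset.range (p + 1),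
        Tk ^ j * g ^ (p - j) * ((p.choose j : ℕ) : PowerSeries K) := by
      conv_lhs => rw [hfg]
      exact add_pow Tk g p
    rw [hsum, map_sum, hq0]
    rw [Finset.sum_range_succ, Finset.sum_range_succ]
    have hz : ∀ j ∈ Finset.range (q0 + 1),
        PowerSeries.coeff n
          (Tk ^ j * g ^ (q0 + 2 - j) * (((q0 + 2).choose j : ℕ) : PowerSeries K)) = 0 := by
      intro j hj
      rw [Finset.mem_range] at hj
      have hle : n + 1 ≤ n * (q0 + 2 - j) :=
        calc n + 1 ≤ n * 2 := by omega
        _ ≤ n * (q0 + 2 - j) := Nat.mul_le_mul_left n (by omega)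
      have h1 : (PowerSeries.X : PowerSeries K) ^ (n + 1) ∣ g ^ (q0 + 2 - j) :=
        dvd_trans (pow_dvd_pow _ hle) (by rw [pow_mul]; exact pow_dvd_pow_of_dvd ⟨r, hr⟩ _)
      exact PowerSeries.X_pow_dvd_iff.mp ((h1.mul_left _).mul_right _) n (Nat.lt_succ_self n)
    rw [Finset.sum_eq_zero hz, zero_add]
    have e1 : q0 + 2 - (q0 + 1) = 1 := by omega
    have e2 : q0 + 2 - (q0 + 2) = 0 := by omega
    have e3 : (q0 + 2).choose (q0 + 1) = q0 + 2 := Nat.choose_succ_self_right (q0 + 1)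
    have e4 : (q0 + 2).choose (q0 + 2) = 1 := Nat.choose_self _
    rw [e1, e2, e3, e4, pow_one, pow_zero]
    have h5 : PowerSeries.coeff n (Tk ^ (q0 + 1) * g) = PowerSeries.coeff n f := by
      have h6 : Tk ^ (q0 + 1) * g = (Tk ^ (q0 + 1) * r) * PowerSeries.X ^ n := by
        rw [hr]; ring
      have h7 := PowerSeries.coeff_mul_X_pow (Tk ^ (q0 + 1) * r) n 0
      rw [zero_add] at h7
      calc PowerSeries.coeff n (Tk ^ (q0 + 1) * g)
          = PowerSeries.coeff 0 (Tk ^ (q0 + 1) * r) := by rw [h6, h7]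
        _ = PowerSeries.constantCoeff (Tk ^ (q0 + 1)) * PowerSeries.constantCoeff r := by
            rw [PowerSeries.coeff_zero_eq_constantCoeff_apply, map_mul]
        _ = PowerSeries.coeff 0 r := by
            rw [map_pow, hTk0, one_pow, one_mul, PowerSeries.coeff_zero_eq_constantCoeff_apply]
        _ = PowerSeries.coeff n f := hr0
    have hc1 : (((q0 + 2 : ℕ)) : PowerSeries K) = PowerSeries.C ((q0 + 2 : ℕ) : K) :=
      (map_natCast (PowerSeries.C) _).symm
    rw [hc1, PowerSeries.coeff_mul_C, h5]
    push_cast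
    ring
  -- Step B : coefficient n of Tk^p
  obtain ⟨c, hc⟩ := dw_key T n
  have hSn : algebraMap (WittVector p k) K
        (if p ∣ n then WittVector.frobenius (PowerSeries.coeff (n / p) T) else 0)
      = (if p ∣ n then σK (PowerSeries.coeff (n / p) f) else 0) := by
    split_ifs with hd
    · have hlt : n / p < n := Nat.div_lt_self hn hp.one_lt
      have hct : PowerSeries.coeff (n / p) T = (ih (n / p) hlt).choose := by
        rw [hT, PowerSeries.coeff_mk, dif_pos hlt]
      rw [hct, ← hσ, (ih (n / p) hlt).choose_spec]
    · exact map_zero _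
  have hB : PowerSeries.coeff n (Tk ^ p)
      = (if p ∣ n then σK (PowerSeries.coeff (n / p) f) else 0)
        + (p : K) * algebraMap (WittVector p k) K c := by
    rw [hTk, ← map_pow, PowerSeries.coeff_map]
    have hcT : PowerSeries.coeff n (T ^ p)
        = (if p ∣ n then WittVector.frobenius (PowerSeries.coeff (n / p) T) else 0)
          + (p : WittVector p k) * c := by linear_combination hc
    rw [hcT, map_add, map_mul, map_natCast, hSn]
  -- Step C : coefficient n of the right-hand side
  have hC : ∃ d : WittVector p k,
      PowerSeries.coeff n
          ((PowerSeries.mk fun m => if p ∣ m then σK (PowerSeries.coeff (m / p) f) else 0)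
            * PowerSeries.map (algebraMap (WittVector p k) K)
                (1 + (p : PowerSeries (WittVector p k)) * PowerSeries.X * h))
      = (if p ∣ n then σK (PowerSeries.coeff (n / p) f) else 0)
        + (p : K) * algebraMap (WittVector p k) K d := by
    rw [PowerSeries.coeff_mul]
    have hmem : ((n, 0) : ℕ × ℕ) ∈ Finset.HasAntidiagonal.antidiagonal n := by simp
    rw [← Finset.sum_erase_add _ _ hmem]
    have ht : PowerSeries.coeff (n, 0).1
          (PowerSeries.mk fun m => if p ∣ m then σK (PowerSeries.coeff (m / p) f) else 0)
        * PowerSeries.coeff (n, 0).2 (PowerSeries.map (algebraMap (WittVector p k) K)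
            (1 + (p : PowerSeries (WittVector p k)) * PowerSeries.X * h))
        = (if p ∣ n then σK (PowerSeries.coeff (n / p) f) else 0) := by
      have hM0 : PowerSeries.coeff 0 (PowerSeries.map (algebraMap (WittVector p k) K)
          (1 + (p : PowerSeries (WittVector p k)) * PowerSeries.X * h)) = 1 := by
        rw [PowerSeries.coeff_map, PowerSeries.coeff_zero_eq_constantCoeff_apply, map_add,
          map_one, map_mul, map_mul, PowerSeries.constantCoeff_X, mul_zero, zero_mul, add_zero,
          map_one]
      rw [hM0, mul_one, PowerSeries.coeff_mk]
    have hrest : ∃ d : WittVector p k,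
        (∑ ij ∈ (Finset.HasAntidiagonal.antidiagonal n).erase (n, 0),
          PowerSeries.coeff ij.1
            (PowerSeries.mk fun m => if p ∣ m then σK (PowerSeries.coeff (m / p) f) else 0)
          * PowerSeries.coeff ij.2 (PowerSeries.map (algebraMap (WittVector p k) K)
              (1 + (p : PowerSeries (WittVector p k)) * PowerSeries.X * h)))
        = (p : K) * algebraMap (WittVector p k) K d := by
      have hclosed : ∀ x y : K,
          (∃ d : WittVector p k, x = (p : K) * algebraMap (WittVector p k) K d) →
          (∃ d : WittVector p k, y = (p : K) * algebraMap (WittVector p k) K d) →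
          (∃ d : WittVector p k, x + y = (p : K) * algebraMap (WittVector p k) K d) := by
        rintro x y ⟨d1, rfl⟩ ⟨d2, rfl⟩
        exact ⟨d1 + d2, by rw [map_add]; ring⟩
      have h0 : ∃ d : WittVector p k, (0 : K) = (p : K) * algebraMap (WittVector p k) K d :=
        ⟨0, by rw [map_zero, mul_zero]⟩
      have hterm : ∀ ij ∈ (Finset.HasAntidiagonal.antidiagonal n).erase (n, 0),
          ∃ d : WittVector p k,
            PowerSeries.coeff ij.1
              (PowerSeries.mk fun m => if p ∣ m then σK (PowerSeries.coeff (m / p) f) else 0)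
            * PowerSeries.coeff ij.2 (PowerSeries.map (algebraMap (WittVector p k) K)
                (1 + (p : PowerSeries (WittVector p k)) * PowerSeries.X * h))
            = (p : K) * algebraMap (WittVector p k) K d := by
        intro ij hij
        rw [Finset.mem_erase, Finset.HasAntidiagonal.mem_antidiagonal] at hij
        have hj1 : 1 ≤ ij.2 := by
          by_contra hj
          push_neg at hj
          apply hij.1
          have hj0 : ij.2 = 0 := by omega
          have : ij.1 = n := by omega
          exact Prod.ext this hj0
        have hi : ij.1 < n := by omega
        -- second factor
        have hM : PowerSeries.coeff ij.2 (PowerSeries.map (algebraMap (WittVector p k) K)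
            (1 + (p : PowerSeries (WittVector p k)) * PowerSeries.X * h))
            = (p : K) * algebraMap (WittVector p k) K
                (PowerSeries.coeff ij.2 (PowerSeries.X * h)) := by
          rw [PowerSeries.coeff_map, map_add, PowerSeries.coeff_one, if_neg (by omega)]
          have hcast : ((p : ℕ) : PowerSeries (WittVector p k))
              = PowerSeries.C ((p : ℕ) : WittVector p k) :=
            (map_natCast (PowerSeries.C) _).symm
          rw [zero_add, mul_assoc, hcast, PowerSeries.coeff_C_mul, map_mul, map_natCast]
        rw [hM]
        -- first factor
        rw [PowerSeries.coeff_mk]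
        split_ifs with hd
        · have hlt : ij.1 / p < n := lt_of_le_of_lt (Nat.div_le_self _ _) hi
          obtain ⟨b, hb⟩ := ih (ij.1 / p) hlt
          refine ⟨WittVector.frobenius b * PowerSeries.coeff ij.2 (PowerSeries.X * h), ?_⟩
          rw [← hb, hσ, RingHom.map_mul]
          ring
        · exact ⟨0, by rw [map_zero, mul_zero, zero_mul]⟩
      exact Finset.sum_induction _
        (fun x => ∃ d : WittVector p k, x = (p : K) * algebraMap (WittVector p k) K d)
        hclosed h0 hterm
    obtain ⟨d, hd⟩ := hrest
    exact ⟨d, by rw [hd, ht]; ring⟩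
  -- combine
  obtain ⟨d, hd⟩ := hC
  have hmain := congrArg (PowerSeries.coeff n) heq
  rw [hA, hB, hd] at hmain
  have hpne : (p : K) ≠ 0 := by
    have h1 : algebraMap (WittVector p k) K (p : WittVector p k) = (p : K) :=
      map_natCast _ p
    intro h0
    exact WittVector.p_nonzero p k
      (IsFractionRing.injective (WittVector p k) K (by rw [h1, h0, map_zero]))
  refine ⟨d - c, ?_⟩
  have hfin : (p : K) * PowerSeries.coeff n f
      = (p : K) * algebraMap (WittVector p k) K (d - c) := by
    rw [map_sub]
    linear_combination hmain
  exact (mul_left_cancel₀ hpne hfin).symm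

end Main



/-- Dwork's integrality criterion, one variable: for `W = W(k)`,
`K = Frac W`, `σK` the extension of the Frobenius to `K`, and
`f ∈ 1 + t·K⟦t⟧`, one has `f ∈ 1 + t·W⟦t⟧` if and only if
`f(t)^p / f^σ(t^p) ∈ 1 + p·t·W⟦t⟧`, i.e. iff
`f^p = f^σ(t^p)·(1 + p·t·h)` for some `h ∈ W⟦t⟧`. -/
theorem stmt7 (p : ℕ) [Fact p.Prime] (k : Type*) [Field k] [CharP k p] [PerfectRing k p]
    (K : Type*) [Field K] [Algebra (WittVector p k) K] [IsFractionRing (WittVector p k) K]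
    (σK : K →+* K)
    (hσ : ∀ w : WittVector p k,
      σK (algebraMap (WittVector p k) K w) = algebraMap (WittVector p k) K (WittVector.frobenius w))
    (f : PowerSeries K) (hf : PowerSeries.constantCoeff f = 1) :
    (∃ F : PowerSeries (WittVector p k),
        PowerSeries.map (algebraMap (WittVector p k) K) F = f) ↔
    (∃ h : PowerSeries (WittVector p k),
      f ^ p = (PowerSeries.mk fun n => if p ∣ n then σK (PowerSeries.coeff (n / p) f) else 0)
        * PowerSeries.map (algebraMap (WittVector p k) K)
            (1 + (p : PowerSeries (WittVector p k)) * PowerSeries.X * h)) := by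
  constructor
  · rintro ⟨F, rfl⟩
    have hF1 : PowerSeries.constantCoeff F = 1 := by
      apply IsFractionRing.injective (WittVector p k) K
      rw [map_one]
      rw [← hf, ← PowerSeries.coeff_zero_eq_constantCoeff_apply,
        ← PowerSeries.coeff_zero_eq_constantCoeff_apply]
      exact (PowerSeries.coeff_map _ 0 F).symm
    exact dw_forward σK hσ F hF1
  · rintro ⟨h, heq⟩
    refine ⟨PowerSeries.mk fun N => (dw_reverse σK hσ f hf h heq N).choose, ?_⟩
    ext N
    rw [PowerSeries.coeff_map, PowerSeries.coeff_mk]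
    exact (dw_reverse σK hσ f hf h heq N).choose_spec
end

section
/- Let W = W(k) for k algebraically closed of characteristic p, with Frobenius σ. Given γ₀ ∈ 1 + pW and g₀ ∈ k^×, there exists a unique x ∈ W^× such that x ≡ [g₀] mod p (where [g₀] is any lift of g₀) and x^σ = x^p · γ₀. -/
open WittVector Finset

section Stmt9Aux

variable {p : ℕ} [hp : Fact p.Prime] {k : Type*} [Field k] [CharP k p]

local notation "𝕎" => WittVector p k

lemma stmt9_coeff_eq_zero_of_dvd :
    ∀ (n : ℕ) (x : 𝕎), (p : 𝕎) ^ n ∣ x → ∀ i < n, x.coeff i = 0 := by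
  intro n
  induction n with
  | zero => intro x _ i hi; omega
  | succ n ih =>
    rintro x ⟨c, rfl⟩ i hi
    have hx : (p : 𝕎) ^ (n + 1) * c = verschiebung (frobenius ((p : 𝕎) ^ n * c)) := by
      rw [verschiebung_frobenius]; ring
    rw [hx]
    match i, hi with
    | 0, _ => exact verschiebung_coeff_zero _
    | j + 1, hj =>
      rw [verschiebung_coeff_succ, coeff_frobenius_charP,
        ih _ ⟨c, rfl⟩ j (by omega), zero_pow hp.out.ne_zero]

lemma stmt9_dvd_of_coeff [PerfectRing k p] :
    ∀ (n : ℕ) (x : 𝕎), (∀ i < n, x.coeff i = 0) → (p : 𝕎) ^ n ∣ x := by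
  intro n
  induction n with
  | zero => intro x _; simp
  | succ n ih =>
    intro x h
    have hx : verschiebung (x.shift 1) = x := by
      ext i
      match i with
      | 0 => rw [verschiebung_coeff_zero, h 0 (Nat.succ_pos n)]
      | j + 1 => rw [verschiebung_coeff_succ, shift_coeff, Nat.add_comm]
    obtain ⟨c, hc⟩ := ih (x.shift 1) (fun i hi => by
      rw [shift_coeff]; exact h (1 + i) (by omega))
    obtain ⟨d, hd⟩ := (frobenius_bijective p k).surjective c
    refine ⟨d, ?_⟩
    have hfd : frobenius ((p : 𝕎) ^ n * d) = (p : 𝕎) ^ n * c := by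
      rw [map_mul, map_pow, map_natCast, hd]
    rw [← hx, hc, ← hfd, verschiebung_frobenius]
    ring

lemma stmt9_dvd_iff [PerfectRing k p] (n : ℕ) (x y : 𝕎) :
    (p : 𝕎) ^ n ∣ x - y ↔ ∀ i < n, x.coeff i = y.coeff i := by
  constructor
  · intro hd i hi
    have h1 : WittVector.truncate (p := p) n (x - y) = 0 := by
      rw [← RingHom.mem_ker, WittVector.mem_ker_truncate]
      exact stmt9_coeff_eq_zero_of_dvd n _ hd
    have h2 : WittVector.truncate (p := p) n x = WittVector.truncate (p := p) n y := by
      rw [← sub_eq_zero, ← map_sub, h1]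
    have h3 := congrArg (fun t => t.coeff (⟨i, hi⟩ : Fin n)) h2
    simpa using h3
  · intro h
    apply stmt9_dvd_of_coeff
    intro i hi
    have ht : WittVector.truncate (p := p) n x = WittVector.truncate (p := p) n y := by
      ext j
      simpa using h j j.2
    have : WittVector.truncate (p := p) n (x - y) = 0 := by
      rw [map_sub, ht, sub_self]
    exact (WittVector.mem_ker_truncate _ _).mp (by rwa [RingHom.mem_ker]) i hi

lemma stmt9_eq_zero (x : 𝕎) (h : ∀ n, (p : 𝕎) ^ n ∣ x) : x = 0 := by
  ext i
  rw [WittVector.zero_coeff]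
  exact stmt9_coeff_eq_zero_of_dvd (i + 1) x (h (i + 1)) i (by omega)

omit [CharP k p] in
lemma stmt9_pow_dvd {n : ℕ} (hn : 1 ≤ n) {a b : 𝕎} (h : (p : 𝕎) ^ n ∣ a - b) :
    (p : 𝕎) ^ (n + 1) ∣ a ^ p - b ^ p := by
  obtain ⟨s, hs⟩ : (a - b) ∣ (∑ i ∈ range p, a ^ i * b ^ (p - 1 - i)) - p * b ^ (p - 1) := by
    have hrw : (∑ i ∈ range p, a ^ i * b ^ (p - 1 - i)) - (p : 𝕎) * b ^ (p - 1)
        = ∑ i ∈ range p, (a ^ i * b ^ (p - 1 - i) - b ^ (p - 1)) := by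
      rw [Finset.sum_sub_distrib, Finset.sum_const, Finset.card_range, nsmul_eq_mul]
    rw [hrw]
    refine Finset.dvd_sum fun i hi => ?_
    have hexp : i + (p - 1 - i) = p - 1 := by
      have h1 := Finset.mem_range.mp hi
      omega
    have e : a ^ i * b ^ (p - 1 - i) - b ^ (p - 1) = (a ^ i - b ^ i) * b ^ (p - 1 - i) := by
      rw [sub_mul, ← pow_add, hexp]
    rw [e]
    exact (sub_dvd_pow_sub_pow a b i).mul_right _
  have key : a ^ p - b ^ p = (p : 𝕎) * b ^ (p - 1) * (a - b) + s * (a - b) ^ 2 := by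
    have hS : (∑ i ∈ range p, a ^ i * b ^ (p - 1 - i)) = (p : 𝕎) * b ^ (p - 1) + (a - b) * s := by
      rw [← hs]; ring
    rw [← geom_sum₂_mul a b p, hS]; ring
  obtain ⟨c, hc⟩ := h
  rw [key]
  apply dvd_add
  · exact ⟨b ^ (p - 1) * c, by rw [hc]; ring⟩
  · have h2 : (p : 𝕎) ^ (n + 1) ∣ (a - b) ^ 2 := by
      rw [hc, mul_pow, ← pow_mul]
      exact Dvd.dvd.mul_right (pow_dvd_pow _ (by omega)) _
    exact h2.mul_left s

lemma stmt9_dvd_of_frobenius [PerfectRing k p] {n : ℕ} {z : 𝕎}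
    (h : (p : 𝕎) ^ n ∣ frobenius z) : (p : 𝕎) ^ n ∣ z := by
  obtain ⟨c, hc⟩ := h
  obtain ⟨d, hd⟩ := (frobenius_bijective p k).surjective c
  refine ⟨d, (frobenius_bijective p k).injective ?_⟩
  rw [map_mul, map_pow, map_natCast, hd, hc]

lemma stmt9_frob_teich (r : k) : frobenius (teichmuller p r) = (teichmuller p r) ^ p := by
  rw [← map_pow]
  ext i
  rw [coeff_frobenius_charP]
  match i with
  | 0 => rw [teichmuller_coeff_zero, teichmuller_coeff_zero]
  | j + 1 =>
    rw [teichmuller_coeff_pos p r (j + 1) (Nat.succ_pos j),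
      teichmuller_coeff_pos p _ (j + 1) (Nat.succ_pos j), zero_pow hp.out.ne_zero]

end Stmt9Aux

/-- for `W = W(k)`, `k` algebraically closed of characteristic `p`,
`γ₀ ∈ 1 + pW` and `g₀ ∈ k^×`, there is a unique unit `x ∈ W^×` with
`x ≡ [g₀] mod p` (Teichmüller lift) and `x^σ = x^p·γ₀`. -/
theorem stmt9 (p : ℕ) [Fact p.Prime] (k : Type*) [Field k] [CharP k p] [IsAlgClosed k]
    (γ₀ : WittVector p k) (hγ : γ₀ - 1 ∈ Ideal.span {(p : WittVector p k)}) (g₀ : kˣ) :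
    ∃! x : WittVector p k, IsUnit x ∧
      x - WittVector.teichmuller p (g₀ : k) ∈ Ideal.span {(p : WittVector p k)} ∧
      WittVector.frobenius x = x ^ p * γ₀ := by
  have hγd : (p : WittVector p k) ∣ γ₀ - 1 := Ideal.mem_span_singleton.mp hγ
  -- the approximating sequence
  let x : ℕ → WittVector p k := fun n =>
    Nat.rec (teichmuller p (g₀ : k)) (fun _ xn => (frobeniusEquiv p k).symm (xn ^ p * γ₀)) n
  have hx0 : x 0 = teichmuller p (g₀ : k) := rfl
  have hfrob : ∀ n, frobenius (x (n + 1)) = x n ^ p * γ₀ := by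
    intro n
    show frobenius ((frobeniusEquiv p k).symm (x n ^ p * γ₀)) = x n ^ p * γ₀
    rw [← WittVector.frobeniusEquiv_apply]
    exact (frobeniusEquiv p k).apply_symm_apply _
  have hdiff : ∀ n, (p : WittVector p k) ^ (n + 1) ∣ x (n + 1) - x n := by
    intro n
    induction n with
    | zero =>
      apply stmt9_dvd_of_frobenius
      rw [map_sub, hfrob 0, hx0, stmt9_frob_teich]
      have e : teichmuller p (g₀ : k) ^ p * γ₀ - teichmuller p (g₀ : k) ^ p
          = teichmuller p (g₀ : k) ^ p * (γ₀ - 1) := by ring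
      rw [pow_one, e]
      exact hγd.mul_left _
    | succ n ih =>
      apply stmt9_dvd_of_frobenius
      rw [map_sub, hfrob (n + 1), hfrob n]
      have e : x (n + 1) ^ p * γ₀ - x n ^ p * γ₀ = (x (n + 1) ^ p - x n ^ p) * γ₀ := by ring
      rw [e]
      exact (stmt9_pow_dvd (by omega) ih).mul_right _
  have hmono : ∀ m n, n ≤ m → (p : WittVector p k) ^ n ∣ x m - x n := by
    intro m
    induction m with
    | zero => intro n hn; interval_cases n; simp
    | succ m ih =>
      intro n hn
      rcases Nat.lt_or_ge n (m + 1) with h | h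
      · have h1 := ih n (by omega)
        have h2 := hdiff m
        have e : x (m + 1) - x n = (x (m + 1) - x m) + (x m - x n) := by ring
        rw [e]
        exact dvd_add (dvd_trans (pow_dvd_pow _ (by omega)) h2) h1
      · have : n = m + 1 := by omega
        subst this; simp
  -- the limit
  let X : WittVector p k := WittVector.mk p (fun i => (x (i + 1)).coeff i)
  have hXc : ∀ i, X.coeff i = (x (i + 1)).coeff i := fun i =>
    congrFun (WittVector.coeff_mk p _) i
  have hX : ∀ n, (p : WittVector p k) ^ n ∣ X - x n := by
    intro n
    rw [stmt9_dvd_iff]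
    intro i hi
    rw [hXc i]
    exact ((stmt9_dvd_iff (i + 1) (x n) (x (i + 1))).mp (hmono n (i + 1) (by omega)) i
      (by omega)).symm
  have hX0' : (p : WittVector p k) ^ 1 ∣ X - x 0 := by
    have e : X - x 0 = (X - x 1) + (x 1 - x 0) := by ring
    rw [e]
    exact dvd_add (hX 1) (hdiff 0)
  have hX1 : (p : WittVector p k) ∣ X - teichmuller p (g₀ : k) := by
    rw [← hx0]
    simpa using hX0'
  have hc0 : X.coeff 0 = (g₀ : k) := by
    have h := (stmt9_dvd_iff 1 X (x 0)).mp hX0' 0 (by omega)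
    rw [h, hx0, teichmuller_coeff_zero]
  have hu : IsUnit X := isUnit_of_coeff_zero_ne_zero X (by rw [hc0]; exact g₀.ne_zero)
  have hfX : frobenius X = X ^ p * γ₀ := by
    rw [← sub_eq_zero]
    apply stmt9_eq_zero
    intro n
    have h1 : (p : WittVector p k) ^ (n + 2) ∣ frobenius (X - x (n + 2)) := by
      obtain ⟨c, hc⟩ := hX (n + 2)
      rw [hc, map_mul, map_pow, map_natCast]
      exact Dvd.intro _ rfl
    have h2 : (p : WittVector p k) ^ (n + 2) ∣ x (n + 1) ^ p - X ^ p := by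
      refine stmt9_pow_dvd (by omega) ?_
      have := (hX (n + 1)).neg_right
      rwa [neg_sub] at this
    have heq : frobenius X - X ^ p * γ₀
        = frobenius (X - x (n + 2)) + (x (n + 1) ^ p - X ^ p) * γ₀ := by
      rw [map_sub, hfrob (n + 1)]; ring
    rw [heq]
    exact dvd_trans (pow_dvd_pow _ (by omega)) (dvd_add h1 (h2.mul_right _))
  refine ⟨X, ⟨hu, Ideal.mem_span_singleton.mpr hX1, hfX⟩, ?_⟩
  rintro y ⟨-, hy2, hy3⟩
  have h0 : (p : WittVector p k) ^ 1 ∣ y - X := by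
    rw [pow_one]
    have a1 := Ideal.mem_span_singleton.mp hy2
    have e : y - X = (y - teichmuller p (g₀ : k)) - (X - teichmuller p (g₀ : k)) := by ring
    rw [e]
    exact dvd_sub a1 hX1
  have hall : ∀ n, (p : WittVector p k) ^ (n + 1) ∣ y - X := by
    intro n
    induction n with
    | zero => exact h0
    | succ n ih =>
      apply stmt9_dvd_of_frobenius
      rw [map_sub, hy3, hfX]
      have e : y ^ p * γ₀ - X ^ p * γ₀ = (y ^ p - X ^ p) * γ₀ := by ring
      rw [e]
      exact (stmt9_pow_dvd (by omega) ih).mul_right _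
  have : y - X = 0 :=
    stmt9_eq_zero _ (fun n => dvd_trans (pow_dvd_pow _ (Nat.le_succ n)) (hall n))
  exact sub_eq_zero.mp this
end

section
/- Let H be a finite free W-module with commuting W-linear endomorphisms N₁,…,N_r, a σ-semilinear injective-after-⊗K map F with N_i F = p F N_i, and a decreasing filtration Fil^• by direct summands with Fil⁰ = H, Fil^{ρ+1} = 0, N_i Fil^{j+1} ⊆ Fil^j, and F(Fil^i) ⊆ p^i H. Suppose H admits an F-stable filtration 0 ⊆ U₀ ⊆ ⋯ ⊆ U_ρ = H by N_i-stable direct summands such that each graded piece U_i/U_{i−1} carries an induced Frobenius p^{-i}F that is bijective (i.e. H is ordinary). Then N_j^{ρ+1} = 0 for every j. -/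
private lemma pow_dvd_zero {R : Type*} [CommRing R] [IsNoetherianRing R] [IsLocalRing R]
    (c : R) (hc : ¬IsUnit c) (a : R) (h : ∀ m : ℕ, c ^ m ∣ a) : a = 0 := by
  have hne : (Ideal.span ({c} : Set R)) ≠ ⊤ := by
    rw [Ne, Ideal.span_singleton_eq_top]; exact hc
  have hmem : a ∈ (⨅ m : ℕ, (Ideal.span ({c} : Set R)) ^ m) := by
    rw [Submodule.mem_iInf]
    intro m
    rw [Ideal.span_singleton_pow]
    exact Ideal.mem_span_singleton.mpr (h m)
  have hbot := Ideal.iInf_pow_eq_bot_of_isLocalRing (I := Ideal.span ({c} : Set R)) hne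
  rw [hbot] at hmem
  simpa using hmem

private lemma div_zero_of_tf {R : Type*} [CommRing R] [IsDomain R] [IsPrincipalIdealRing R]
    [IsLocalRing R] {Q : Type*} [AddCommGroup Q] [Module R Q] [Module.Finite R Q]
    [NoZeroSMulDivisors R Q]
    (c : R) (hc : ¬IsUnit c) (q : Q) (h : ∀ m : ℕ, ∃ y, q = c ^ m • y) : q = 0 := by
  haveI : Module.Free R Q := (Module.free_iff_isTorsionFree).mpr inferInstance
  let b := Module.Free.chooseBasis R Q
  have hz : ∀ i, b.repr q i = 0 := by
    intro i
    apply pow_dvd_zero c hc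
    intro m
    obtain ⟨y, hy⟩ := h m
    refine ⟨b.repr y i, ?_⟩
    rw [hy, map_smul, Finsupp.smul_apply, smul_eq_mul]
  have hr : b.repr q = 0 := Finsupp.ext hz
  simpa using (b.repr.map_eq_zero_iff).mp hr

private lemma twist_zero {R : Type*} [CommRing R] [IsDomain R] [IsPrincipalIdealRing R]
    [IsLocalRing R]
    {σ : R →+* R} {Q : Type*} [AddCommGroup Q] [Module R Q] [Module.Finite R Q]
    [NoZeroSMulDivisors R Q]
    (c : R) (hc : ¬IsUnit c) (hσ : σ c = c)
    (G : Q →ₛₗ[σ] Q) (hGs : Function.Surjective G)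
    (M : Q →ₗ[R] Q) (rel : ∀ q, M (G q) = c • G (M q)) (q : Q) : M q = 0 := by
  have div : ∀ (m : ℕ) (q : Q), ∃ y, M q = c ^ m • y := by
    intro m
    induction m with
    | zero => intro q; exact ⟨M q, by simp⟩
    | succ m ih =>
      intro q
      obtain ⟨q', rfl⟩ := hGs q
      obtain ⟨y, hy⟩ := ih q'
      refine ⟨G y, ?_⟩
      rw [rel q', hy, map_smulₛₗ, map_pow, hσ, smul_smul, pow_succ, mul_comm]
  exact div_zero_of_tf c hc (M q) (fun m => div m q)

/-- let `H` be a finite free module over `W = W(k)` with commuting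
endomorphisms `N₁,…,N_r`, a `σ`-semilinear `F` (injective after `⊗K`, here:
injective) with `N_i F = p F N_i`, a Hodge filtration `Fil` by direct summands
(`Fil⁰ = H`, `Fil^{ρ+1} = 0`, `N_i Fil^{j+1} ⊆ Fil^j`, `F(Fil^i) ⊆ p^i H`), and
a slope filtration `0 = P 0 ⊆ P 1 ⊆ ⋯ ⊆ P (ρ+1) = H` by `F`- and `N_i`-stable
direct summands whose graded pieces carry bijective induced Frobenii `p^{-i}F`
(ordinarity). Then `N_j^{ρ+1} = 0` for every `j`. -/
theorem stmt11 (p : ℕ) [Fact p.Prime] (k : Type*) [Field k] [CharP k p] [PerfectRing k p]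
    {H : Type*} [AddCommGroup H] [Module (WittVector p k) H]
    [Module.Finite (WittVector p k) H] [Module.Free (WittVector p k) H]
    (ρ r : ℕ)
    (N : Fin r → Module.End (WittVector p k) H)
    (hNcomm : ∀ i j, N i * N j = N j * N i)
    (F : H →ₛₗ[(WittVector.frobenius : WittVector p k →+* WittVector p k)] H)
    (hFinj : Function.Injective F)
    (hNF : ∀ i x, N i (F x) = (p : WittVector p k) • F (N i x))
    (Fil : ℕ → Submodule (WittVector p k) H)
    (hFil0 : Fil 0 = ⊤) (hFiltop : Fil (ρ + 1) = ⊥) (hFilanti : Antitone Fil)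
    (hFilcompl : ∀ i, ∃ C, IsCompl (Fil i) C)
    (hNFil : ∀ i j x, x ∈ Fil (j + 1) → N i x ∈ Fil j)
    (hFFil : ∀ (i : ℕ) (x : H), x ∈ Fil i → ∃ y, F x = (p : WittVector p k) ^ i • y)
    (P : ℕ → Submodule (WittVector p k) H)
    (hP0 : P 0 = ⊥) (hPtop : P (ρ + 1) = ⊤) (hPmono : Monotone P)
    (hPcompl : ∀ i, ∃ C, IsCompl (P i) C)
    (hPN : ∀ j i x, x ∈ P i → N j x ∈ P i)
    (hPF : ∀ (i : ℕ) (x : H), x ∈ P i → F x ∈ P i)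
    (hunit : ∀ i : ℕ, i ≤ ρ →
      ∃ G : (↥(P (i + 1)) ⧸ (P i).comap (P (i + 1)).subtype) →ₛₗ[(WittVector.frobenius :
              WittVector p k →+* WittVector p k)]
            (↥(P (i + 1)) ⧸ (P i).comap (P (i + 1)).subtype),
        Function.Bijective G ∧
        ∀ x : ↥(P (i + 1)),
          (p : WittVector p k) ^ i • G (Submodule.Quotient.mk x)
            = Submodule.Quotient.mk (⟨F ↑x, hPF (i + 1) ↑x x.2⟩ : ↥(P (i + 1)))) :
    ∀ j, (N j) ^ (ρ + 1) = 0 := by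
  classical
  haveI : IsDomain (WittVector p k) := WittVector.instIsDomain
  haveI hDVR : IsDiscreteValuationRing (WittVector p k) := WittVector.isDiscreteValuationRing
  haveI : IsLocalRing (WittVector p k) := hDVR.toIsLocalRing
  haveI : IsPrincipalIdealRing (WittVector p k) := hDVR.toIsPrincipalIdealRing
  haveI : IsNoetherianRing (WittVector p k) := inferInstance
  haveI : IsNoetherian (WittVector p k) H :=
    isNoetherian_of_isNoetherianRing_of_finite (WittVector p k) H
  have hpirr : Irreducible (p : WittVector p k) := WittVector.irreducible p
  have hpne : (p : WittVector p k) ≠ 0 := hpirr.ne_zero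
  haveI : NoZeroSMulDivisors (WittVector p k) H := by
    refine ⟨fun {c x} hcx => ?_⟩
    by_cases hc : c = 0
    · exact Or.inl hc
    · exact Or.inr (Module.IsTorsionFree.isSMulRegular (IsRegular.of_ne_zero hc) (by simp only [hcx, smul_zero]))
  -- Key step: N j maps P (i+1) into P i
  have key : ∀ (j : Fin r) (i : ℕ), i ≤ ρ → ∀ x : H, x ∈ P (i + 1) → N j x ∈ P i := by
    intro j i hi x hx
    obtain ⟨G, hGbij, hG⟩ := hunit i hi
    have hNrS : ∀ y : H, y ∈ P (i + 1) → N j y ∈ P (i + 1) := fun y hy => hPN j (i + 1) y hy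
    have hle : (P i).comap (P (i + 1)).subtype ≤
        ((P i).comap (P (i + 1)).subtype).comap ((N j).restrict hNrS) := by
      intro y hy
      exact hPN j i _ hy
    -- torsion-free cancellation in the quotient
    have tf : ∀ (c : WittVector p k), c ≠ 0 →
        ∀ q : ↥(P (i + 1)) ⧸ (P i).comap (P (i + 1)).subtype, c • q = 0 → q = 0 := by
      intro c hc q hq
      obtain ⟨y, rfl⟩ := Submodule.Quotient.mk_surjective _ q
      rw [← Submodule.Quotient.mk_smul, Submodule.Quotient.mk_eq_zero] at hq
      have hqy : c • (y : H) ∈ P i := hq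
      obtain ⟨C, hC⟩ := hPcompl i
      have hmem : (y : H) ∈ P i ⊔ C := by rw [hC.sup_eq_top]; trivial
      obtain ⟨a, ha, b, hb, hab⟩ := Submodule.mem_sup.mp hmem
      have hcb : c • b ∈ P i := by
        have heq : c • b = c • (y : H) - c • a := by rw [← hab, smul_add, add_sub_cancel_left]
        rw [heq]
        exact Submodule.sub_mem _ hqy (Submodule.smul_mem _ _ ha)
      have hcb0 : c • b = 0 := by
        have hm : c • b ∈ P i ⊓ C := ⟨hcb, Submodule.smul_mem _ _ hb⟩
        rwa [hC.inf_eq_bot, Submodule.mem_bot] at hm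
      have hb0 : b = 0 := by
        rcases smul_eq_zero.mp hcb0 with h | h
        · exact absurd h hc
        · exact h
      rw [Submodule.Quotient.mk_eq_zero]
      show (y : H) ∈ P i
      rw [← hab, hb0, add_zero]; exact ha
    -- the commutation relation
    have rel : ∀ q : ↥(P (i + 1)) ⧸ (P i).comap (P (i + 1)).subtype,
        Submodule.mapQ _ _ ((N j).restrict hNrS) hle (G q)
          = (p : WittVector p k) •
            G (Submodule.mapQ _ _ ((N j).restrict hNrS) hle q) := by
      intro q
      obtain ⟨y, rfl⟩ := Submodule.Quotient.mk_surjective _ q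
      apply sub_eq_zero.mp
      apply tf ((p : WittVector p k) ^ i) (pow_ne_zero _ hpne)
      rw [smul_sub, sub_eq_zero, ← map_smul (Submodule.mapQ _ _ ((N j).restrict hNrS) hle),
        hG y, Submodule.mapQ_apply, Submodule.mapQ_apply]
      have h1 : ((N j).restrict hNrS) (⟨F ↑y, hPF (i + 1) ↑y y.2⟩ : ↥(P (i + 1)))
          = (p : WittVector p k) • (⟨F ↑(((N j).restrict hNrS) y),
              hPF (i + 1) ↑(((N j).restrict hNrS) y) (((N j).restrict hNrS) y).2⟩
              : ↥(P (i + 1))) := by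
        apply Subtype.ext
        show N j (F ↑y) = (p : WittVector p k) • F (N j ↑y)
        exact hNF j ↑y
      rw [h1, Submodule.Quotient.mk_smul, ← hG (((N j).restrict hNrS) y),
        smul_comm ((p : WittVector p k)) ((p : WittVector p k) ^ i)]
    -- apply the generic twist lemma
    haveI : NoZeroSMulDivisors (WittVector p k)
        (↥(P (i + 1)) ⧸ (P i).comap (P (i + 1)).subtype) := by
      refine ⟨fun {c q} hcq => ?_⟩
      by_cases hc : c = 0
      · exact Or.inl hc
      · exact Or.inr (tf c hc q hcq)
    have Mq0 := twist_zero (R := WittVector p k) (p : WittVector p k) hpirr.not_isUnit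
      (by rw [map_natCast]) G hGbij.2 (Submodule.mapQ _ _ ((N j).restrict hNrS) hle) rel
      (Submodule.Quotient.mk (⟨x, hx⟩ : ↥(P (i + 1))))
    rw [Submodule.mapQ_apply, Submodule.Quotient.mk_eq_zero] at Mq0
    exact Mq0
  -- final induction
  intro j
  have main : ∀ i : ℕ, i ≤ ρ + 1 → ∀ x : H, x ∈ P i → ((N j) ^ i) x = 0 := by
    intro i
    induction i with
    | zero =>
      intro _ x hx
      rw [hP0, Submodule.mem_bot] at hx
      simp [hx]
    | succ i ih =>
      intro hi x hx
      have hNx : N j x ∈ P i := key j i (Nat.lt_succ_iff.mp hi) x hx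
      have hz := ih (le_trans (Nat.le_succ i) hi) (N j x) hNx
      rw [pow_succ]
      simpa using hz
  ext x
  have hxtop : x ∈ P (ρ + 1) := by rw [hPtop]; trivial
  simpa using main (ρ + 1) le_rfl x hxtop
end

section
/- Let H be a finite free module over A = W⟦t⟧ with a perfect (−1)^ρ-symmetric A-bilinear pairing ⟨,⟩: H × H → A and a filtration 0 ⊆ U₀ ⊆ U₁ ⊆ ⋯ ⊆ U_ρ = H together with a decreasing filtration Fil^• such that H = U_i ⊕ Fil^{i+1} for all i and ⟨Fil^i, Fil^{ρ+1−i}⟩ = 0 for all i. Suppose moreover ⟨U_i, U_{ρ−1−i}⟩ = 0 for all i. Set H^{(i)} = U_i ∩ Fil^i, so H = ⊕_i H^{(i)}. Then the pairing restricts to a perfect pairing between H^{(i)} and H^{(ρ−i)}, and ⟨H^{(i)}, H^{(j)}⟩ = 0 whenever i + j ≠ ρ. -/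
/-- linear-algebra skeleton of the Calabi–Yau decomposition.
Given a finite free `A`-module `H` with a perfect `(−1)^ρ`-symmetric pairing
`B`, a filtration `U` and a decreasing filtration `Fil` with
`H = U_i ⊕ Fil^{i+1}`, `⟨Fil^i, Fil^{ρ+1−i}⟩ = 0` and `⟨U_i, U_{ρ−1−i}⟩ = 0`,
the pieces `H^{(i)} = U_i ⊓ Fil^i` satisfy `⟨H^{(i)}, H^{(j)}⟩ = 0` for
`i + j ≠ ρ`, and `B` restricts to a perfect pairing between `H^{(i)}` and
`H^{(ρ−i)}`. -/
theorem stmt12 {A H : Type*} [CommRing A] [AddCommGroup H] [Module A H]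
    [Module.Finite A H] [Module.Free A H] (ρ : ℕ)
    (B : H →ₗ[A] H →ₗ[A] A)
    (hsymm : ∀ x y, B x y = (-1 : A) ^ ρ * B y x)
    (hperf : Function.Bijective fun x => B x)
    (U Fil : ℕ → Submodule A H)
    (hUmono : Monotone U) (hUtop : U ρ = ⊤)
    (hFilanti : Antitone Fil) (hFil0 : Fil 0 = ⊤)
    (hcompl : ∀ i, IsCompl (U i) (Fil (i + 1)))
    (hFilperp : ∀ i j, i + j = ρ + 1 → ∀ x ∈ Fil i, ∀ y ∈ Fil j, B x y = 0)
    (hUperp : ∀ i j, i + j + 1 = ρ → ∀ x ∈ U i, ∀ y ∈ U j, B x y = 0) :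
    (∀ i j, i + j ≠ ρ → ∀ x ∈ U i ⊓ Fil i, ∀ y ∈ U j ⊓ Fil j, B x y = 0) ∧
    (∀ i j, i + j = ρ →
      Function.Bijective fun x : ↥(U i ⊓ Fil i) =>
        LinearMap.domRestrict (B x.1) (U j ⊓ Fil j)) := by
  -- Decomposition: every `y` is `v + g + f` with `v ∈ U (j-1)` (zero if `j = 0`),
  -- `g ∈ U j ⊓ Fil j`, `f ∈ Fil (j+1)`.
  have decomp : ∀ j (y : H), ∃ v g f, y = v + g + f ∧ g ∈ U j ⊓ Fil j ∧
      f ∈ Fil (j + 1) ∧ v ∈ U (j - 1) ∧ (j = 0 → v = 0) := by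
    intro j y
    have hy : y ∈ U j ⊔ Fil (j + 1) := by
      rw [(hcompl j).sup_eq_top]; trivial
    obtain ⟨u, hu, f, hf, huf⟩ := Submodule.mem_sup.mp hy
    cases j with
    | zero =>
        exact ⟨0, u, f, by rw [zero_add, huf],
          ⟨hu, hFil0 ▸ Submodule.mem_top⟩, hf, Submodule.zero_mem _, fun _ => rfl⟩
    | succ k =>
        have hu2 : u ∈ U k ⊔ Fil (k + 1) := by
          rw [(hcompl k).sup_eq_top]; trivial
        obtain ⟨v, hv, w, hw, hvw⟩ := Submodule.mem_sup.mp hu2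
        have hwU : w ∈ U (k + 1) := by
          have hw' : w = u - v := by rw [← hvw]; abel
          exact hw' ▸ Submodule.sub_mem _ hu (hUmono (Nat.le_succ k) hv)
        exact ⟨v, w, f, by rw [← huf, ← hvw], ⟨hwU, hw⟩, hf,
          by simpa using hv, by omega⟩
  constructor
  · -- orthogonality for i + j ≠ ρ
    intro i j hij x hx y hy
    rcases lt_or_gt_of_ne hij with h | h
    · exact hUperp i (ρ - 1 - i) (by omega) x hx.1 y (hUmono (by omega) hy.1)
    · by_cases hj : j ≤ ρ + 1
      · exact hFilperp (ρ + 1 - j) j (by omega) x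
          (hFilanti (by omega : ρ + 1 - j ≤ i) hx.2) y hy.2
      · exact hFilperp 0 (ρ + 1) (by omega) x (hFil0 ▸ Submodule.mem_top) y
          (hFilanti (by omega : ρ + 1 ≤ j) hy.2)
  · intro i j hij
    -- a linear projection `H → U j ⊓ Fil j` restricting to the identity
    have proj : ∃ π : H →ₗ[A] ↥(U j ⊓ Fil j),
        ∀ y (hy : y ∈ U j ⊓ Fil j), π y = ⟨y, hy⟩ := by
      have hC : IsCompl (U j ⊓ Fil j)
          (if j = 0 then Fil 1 else U (j - 1) ⊔ Fil (j + 1)) := by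
        constructor
        · rw [Submodule.disjoint_def]
          intro x hx hx'
          cases j with
          | zero =>
              simp only [if_pos rfl] at hx'
              exact Submodule.disjoint_def.mp (hcompl 0).disjoint x hx.1 hx'
          | succ k =>
              simp only [Nat.succ_ne_zero, if_neg, Nat.add_sub_cancel] at hx'
              obtain ⟨v, hv, f, hf, hvf⟩ := Submodule.mem_sup.mp hx'
              have hfU : f ∈ U (k + 1) := by
                have hf' : f = x - v := by rw [← hvf]; abel
                exact hf' ▸ Submodule.sub_mem _ hx.1 (hUmono (Nat.le_succ k) hv)
              have hf0 : f = 0 :=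
                Submodule.disjoint_def.mp (hcompl (k + 1)).disjoint f hfU hf
              have hxv : x = v := by rw [← hvf, hf0, add_zero]
              exact Submodule.disjoint_def.mp (hcompl k).disjoint x (hxv ▸ hv) hx.2
        · rw [codisjoint_iff, eq_top_iff]
          intro y _
          obtain ⟨v, g, f, rfl, hg, hf, hv, hv0⟩ := decomp j y
          cases j with
          | zero =>
              exact Submodule.add_mem _ (Submodule.add_mem _
                (hv0 rfl ▸ Submodule.zero_mem _) (Submodule.mem_sup_left hg))
                (Submodule.mem_sup_right (by simpa using hf))
          | succ k =>
              refine Submodule.add_mem _ (Submodule.add_mem _ ?_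
                (Submodule.mem_sup_left hg)) ?_
              · exact Submodule.mem_sup_right (by
                  simp only [Nat.succ_ne_zero, if_neg]
                  exact Submodule.mem_sup_left hv)
              · exact Submodule.mem_sup_right (by
                  simp only [Nat.succ_ne_zero, if_neg]
                  exact Submodule.mem_sup_right hf)
      exact ⟨Submodule.linearProjOfIsCompl _ _ hC,
        fun y hy => Submodule.linearProjOfIsCompl_apply_left hC ⟨y, hy⟩⟩
    obtain ⟨π, hπ⟩ := proj
    constructor
    · -- injectivity
      intro x y hxy
      set d : H := x.1 - y.1 with hd
      have hdm : d ∈ U i ⊓ Fil i := Submodule.sub_mem _ x.2 y.2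
      have hdz : ∀ z ∈ U j ⊓ Fil j, B d z = 0 := by
        intro z hz
        have := LinearMap.congr_fun hxy ⟨z, hz⟩
        simp only [LinearMap.domRestrict_apply] at this
        simp [hd, map_sub, this]
      have hBd : B d = 0 := by
        ext w
        obtain ⟨v, g, f, rfl, hg, hf, hv, hv0⟩ := decomp j w
        have h1 : B d v = 0 := by
          rcases Nat.eq_zero_or_pos j with h0 | hpos
          · rw [hv0 h0, map_zero]
          · exact hUperp i (j - 1) (by omega) d hdm.1 v hv
        have h2 : B d g = 0 := hdz g hg
        have h3 : B d f = 0 :=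
          hFilperp i (j + 1) (by omega) d hdm.2 f hf
        simp [map_add, h1, h2, h3]
      have : d = 0 := by
        apply hperf.injective
        simpa using hBd.trans (map_zero B).symm
      exact Subtype.ext (by rwa [sub_eq_zero] at this)
    · -- surjectivity
      intro φ
      obtain ⟨x, hx⟩ := hperf.surjective (φ.comp π)
      simp only at hx
      obtain ⟨v, g, f, hxe, hg, hf, hv, hv0⟩ := decomp i x
      refine ⟨⟨g, hg⟩, ?_⟩
      ext ⟨z, hz⟩
      simp only [LinearMap.domRestrict_apply]
      have hxz : B x z = φ ⟨z, hz⟩ := by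
        rw [hx]; simp [LinearMap.comp_apply, hπ z hz]
      have h1 : B v z = 0 := by
        rcases Nat.eq_zero_or_pos i with h0 | hpos
        · rw [hv0 h0]; simp
        · exact hUperp (i - 1) j (by omega) v hv z hz.1
      have h3 : B f z = 0 :=
        hFilperp (i + 1) j (by omega) f hf z hz.2
      have : B x z = B v z + B g z + B f z := by rw [hxe]; simp [map_add]
      rw [hxz, h1, h3, zero_add, add_zero] at this
      exact this.symm
end
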